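/- (Excessive power reduction) If γ > 0 and either α > 1 (with any ε > 0) or ε > 1 (with any α > 0), then lim_{M→∞} R̃_i(M) = 0. -/

import Mathlib

open Real Filter Topology Finset

noncomputable section

/-- `η = τ·p_p·β/(1+τ·p_p·β)`. -/
def etaP (τ pp β : ℝ) : ℝ := τ * pp * β / (1 + τ * pp * β)

/-- `ω = β(K+η)/(K+1)`. -/
def omegaP (τ pp β K : ℝ) : ℝ := β * (K + etaP τ pp β) / (K + 1)

/-- `σ² = β/((1+τ·p_p·β)(K+1))`. -/
def sigma2P (τ pp β K : ℝ) : ℝ := β / ((1 + τ * pp * β) * (K + 1))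

/-- Generic interference coefficient: with `(b₁,k₁)` and `(b₂,k₂)` the two links involved,
`b₁·b₂/((k₁+1)(k₂+1))·[(k₁+η₁)/(1+τ·p_p·b₂) + k₂·η₁ + k₁·η₂ + η₁·η₂]`.
It specializes to `ξ_{XR,ij}`, `χ_{XR,ij}` and `ζ_{XR,ij}` of (25)–(27). -/
def xiP (τ pp b1 k1 b2 k2 : ℝ) : ℝ :=
  b1 * b2 / ((k1 + 1) * (k2 + 1)) *
    ((k1 + etaP τ pp b1) / (1 + τ * pp * b2) + k2 * etaP τ pp b1
      + k1 * etaP τ pp b2 + etaP τ pp b1 * etaP τ pp b2)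

variable {N : ℕ}

/-- `q_i = p_u σ²_{AR,i} + p_u σ²_{BR,i} + 1`. -/
def qP (τ pp pu : ℝ) (βA βB KA KB : Fin N → ℝ) (i : Fin N) : ℝ :=
  pu * sigma2P τ pp (βA i) (KA i) + pu * sigma2P τ pp (βB i) (KB i) + 1

/-- `Q_i = Σ_{j≠i} p_u·(ξ_{AR,ij}+ξ_{BR,ij}+χ_{AR,ij}+χ_{BR,ij})`. -/
def QP (τ pp pu : ℝ) (βA βB KA KB : Fin N → ℝ) (i : Fin N) : ℝ :=
  ∑ j ∈ Finset.univ \ {i},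
    pu * (xiP τ pp (βA i) (KA i) (βA j) (KA j) + xiP τ pp (βB i) (KB i) (βA j) (KA j)
      + xiP τ pp (βA i) (KA i) (βB j) (KB j) + xiP τ pp (βB i) (KB i) (βB j) (KB j))

/-- `Z_{ij} = p_r·(ζ_{AR,ij}+ζ_{BR,ij})`. -/
def ZP (τ pp pr : ℝ) (βA βB KA KB : Fin N → ℝ) (i j : Fin N) : ℝ :=
  pr * (xiP τ pp (βA j) (KA j) (βA i) (KA i) + xiP τ pp (βB j) (KB j) (βA i) (KA i))

/-- `R̃_{1,i}(M)` of Theorem 1 (uplink phase). -/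
def R1P (lam τ pp pu : ℝ) (βA βB KA KB : Fin N → ℝ) (i : Fin N) (M : ℝ) : ℝ :=
  lam * logb 2 (1 +
    (M * pu * (omegaP τ pp (βA i) (KA i)) ^ 2 + M * pu * (omegaP τ pp (βB i) (KB i)) ^ 2)
      / ((omegaP τ pp (βA i) (KA i) + omegaP τ pp (βB i) (KB i)) * qP τ pp pu βA βB KA KB i
          + QP τ pp pu βA βB KA KB i))

/-- `R̃_{AR,i}(M)` of Theorem 1. -/
def RARP (lam τ pp pu : ℝ) (βA βB KA KB : Fin N → ℝ) (i : Fin N) (M : ℝ) : ℝ :=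
  lam * logb 2 (1 + M * pu * (omegaP τ pp (βA i) (KA i)) ^ 2
      / ((omegaP τ pp (βA i) (KA i) + omegaP τ pp (βB i) (KB i)) * qP τ pp pu βA βB KA KB i
          + QP τ pp pu βA βB KA KB i))

/-- `R̃_{BR,i}(M)` of Theorem 1. -/
def RBRP (lam τ pp pu : ℝ) (βA βB KA KB : Fin N → ℝ) (i : Fin N) (M : ℝ) : ℝ :=
  lam * logb 2 (1 + M * pu * (omegaP τ pp (βB i) (KB i)) ^ 2
      / ((omegaP τ pp (βA i) (KA i) + omegaP τ pp (βB i) (KB i)) * qP τ pp pu βA βB KA KB i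
          + QP τ pp pu βA βB KA KB i))

/-- `R̃_{RA,i}(M)` of Theorem 1 (downlink to `U_{A,i}`). -/
def RRAP (lam τ pp pr : ℝ) (βA βB KA KB : Fin N → ℝ) (i : Fin N) (M : ℝ) : ℝ :=
  lam * logb 2 (1 + M * pr * (omegaP τ pp (βA i) (KA i)) ^ 2
      / (∑ j, (omegaP τ pp (βA j) (KA j) + omegaP τ pp (βB j) (KB j)
          + ZP τ pp pr βA βB KA KB i j)))

/-- `R̃_{RB,i}(M)` of Theorem 1 (downlink to `U_{B,i}`). -/
def RRBP (lam τ pp pr : ℝ) (βA βB KA KB : Fin N → ℝ) (i : Fin N) (M : ℝ) : ℝ :=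
  lam * logb 2 (1 + M * pr * (omegaP τ pp (βB i) (KB i)) ^ 2
      / (∑ j, (omegaP τ pp (βA j) (KA j) + omegaP τ pp (βB j) (KB j)
          + ZP τ pp pr βA βB KA KB i j)))

/-- `R̃_{2,i}(M) = min(R̃_{AR,i}, R̃_{RB,i}) + min(R̃_{BR,i}, R̃_{RA,i})`. -/
def R2P (lam τ pp pu pr : ℝ) (βA βB KA KB : Fin N → ℝ) (i : Fin N) (M : ℝ) : ℝ :=
  min (RARP lam τ pp pu βA βB KA KB i M) (RRBP lam τ pp pr βA βB KA KB i M)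
    + min (RBRP lam τ pp pu βA βB KA KB i M) (RRAP lam τ pp pr βA βB KA KB i M)

/-- `R̃_i(M) = min(R̃_{1,i}(M), R̃_{2,i}(M))`. -/
def RtotP (lam τ pp pu pr : ℝ) (βA βB KA KB : Fin N → ℝ) (i : Fin N) (M : ℝ) : ℝ :=
  min (R1P lam τ pp pu βA βB KA KB i M) (R2P lam τ pp pu pr βA βB KA KB i M)

end

/-!
With `p_p → 0` we get `η → 0` and `ω → ψ = βK/(K+1)`, and with `p_u, p_r → 0` the SINR
denominators of Theorem 1 tend to the positive constants `ψ_{AR,i} + ψ_{BR,i}` (uplink) and `S`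
(downlink). Every SINR numerator has the form `M·p·ω²`, and `M·p = E·M^{1-δ} → 0` when the
exponent `δ` of `p` exceeds `1`. So for `α > 1` the uplink rate `R̃_{1,i}` vanishes, and for
`ε > 1` both downlink rates do. All rates are eventually nonnegative, which squeezes the minima
defining `R̃_i` to `0`.
-/

section Limits

variable {ι : Type*} {l : Filter ι}

theorem tendsto_mul_div_rpow_atTop (E : ℝ) {δ : ℝ} (hδ : 1 < δ) :
    Tendsto (fun x : ℝ => x * (E / x ^ δ)) atTop (𝓝 0) := by
  have h : Tendsto (fun x : ℝ => E * (x ^ (δ - 1))⁻¹) atTop (𝓝 0) := by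
    simpa using ((tendsto_rpow_atTop (sub_pos.2 hδ)).inv_tendsto_atTop).const_mul E
  refine h.congr' ?_
  filter_upwards [eventually_gt_atTop 0] with x hx
  rw [rpow_sub_one hx.ne']
  field_simp

theorem tendsto_min_of_tendsto_zero_of_nonneg {a b : ι → ℝ} (ha : Tendsto a l (𝓝 0))
    (hb : ∀ᶠ x in l, 0 ≤ b x) : Tendsto (fun x => min (a x) (b x)) l (𝓝 0) := by
  have hlow : Tendsto (fun x => min (a x) 0) l (𝓝 0) := by
    simpa using ha.min (tendsto_const_nhds (x := (0 : ℝ)))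
  refine tendsto_of_tendsto_of_tendsto_of_le_of_le' hlow ha ?_ (.of_forall fun x => min_le_left _ _)
  filter_upwards [hb] with x hx using min_le_min_left _ hx

theorem tendsto_min_of_nonneg_of_tendsto_zero {a b : ι → ℝ} (ha : ∀ᶠ x in l, 0 ≤ a x)
    (hb : Tendsto b l (𝓝 0)) : Tendsto (fun x => min (a x) (b x)) l (𝓝 0) := by
  simpa only [min_comm] using tendsto_min_of_tendsto_zero_of_nonneg hb ha

theorem tendsto_mul_logb_one_add_div {n d : ι → ℝ} {d₀ : ℝ} (c b : ℝ)
    (hn : Tendsto n l (𝓝 0)) (hd : Tendsto d l (𝓝 d₀)) (hd₀ : d₀ ≠ 0) :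
    Tendsto (fun x => c * logb b (1 + n x / d x)) l (𝓝 0) := by
  have h := (hn.div hd hd₀).const_add 1
  rw [zero_div, add_zero] at h
  simpa using ((continuousAt_logb one_ne_zero).tendsto.comp h).const_mul c

theorem mul_logb_one_add_div_nonneg {c b n d : ℝ} (hc : 0 ≤ c) (hb : 1 < b) (hn : 0 ≤ n)
    (hd : 0 ≤ d) : 0 ≤ c * logb b (1 + n / d) :=
  mul_nonneg hc (logb_nonneg hb (le_add_of_nonneg_right (div_nonneg hn hd)))

end Limits

noncomputable def psiP (β K : ℝ) : ℝ := β * K / (K + 1)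

theorem psiP_pos {β K : ℝ} (hβ : 0 < β) (hK : 0 < K) : 0 < psiP β K := by
  unfold psiP; positivity

variable {N : ℕ}

noncomputable def uplinkDenom (τ pp pu : ℝ) (βA βB KA KB : Fin N → ℝ) (i : Fin N) : ℝ :=
  (omegaP τ pp (βA i) (KA i) + omegaP τ pp (βB i) (KB i)) * qP τ pp pu βA βB KA KB i
    + QP τ pp pu βA βB KA KB i

noncomputable def downlinkDenom (τ pp pr : ℝ) (βA βB KA KB : Fin N → ℝ) (i : Fin N) :
    ℝ :=
  ∑ j, (omegaP τ pp (βA j) (KA j) + omegaP τ pp (βB j) (KB j) + ZP τ pp pr βA βB KA KB i j)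

section SmallPilotPower

variable {ι : Type*} {l : Filter ι} {pp : ι → ℝ} (hpp : Tendsto pp l (𝓝 0)) (τ : ℝ)
include hpp

theorem tendsto_etaP (β : ℝ) : Tendsto (fun x => etaP τ (pp x) β) l (𝓝 0) := by
  have h : Tendsto (fun x => τ * pp x * β) l (𝓝 0) := by
    simpa using (hpp.const_mul τ).mul_const β
  have h' := h.div (h.const_add 1) (by simp)
  rwa [add_zero, zero_div] at h'

theorem tendsto_omegaP (β K : ℝ) :
    Tendsto (fun x => omegaP τ (pp x) β K) l (𝓝 (psiP β K)) := by
  simpa [psiP, omegaP] using (((tendsto_etaP hpp τ β).const_add K).const_mul β).div_const (K + 1)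

theorem tendsto_sigma2P (β K : ℝ) :
    Tendsto (fun x => sigma2P τ (pp x) β K) l (𝓝 (β / (K + 1))) := by
  have h : Tendsto (fun x => 1 + τ * pp x * β) l (𝓝 1) := by
    simpa using ((hpp.const_mul τ).mul_const β).const_add 1
  have h' := (tendsto_const_nhds (x := β / (K + 1))).div h one_ne_zero
  rw [div_one] at h'
  refine h'.congr fun x => ?_
  rw [Pi.div_apply, sigma2P, div_div, mul_comm]

theorem tendsto_xiP (b₁ k₁ b₂ k₂ : ℝ) :
    Tendsto (fun x => xiP τ (pp x) b₁ k₁ b₂ k₂) l (𝓝 (xiP τ 0 b₁ k₁ b₂ k₂)) := by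
  have h : ContinuousAt (fun p => xiP τ p b₁ k₁ b₂ k₂) 0 := by
    simp only [xiP, etaP]
    fun_prop (disch := simp)
  exact h.tendsto.comp hpp

variable (βA βB KA KB : Fin N → ℝ) (i : Fin N)

theorem tendsto_qP {pu : ι → ℝ} (hpu : Tendsto pu l (𝓝 0)) :
    Tendsto (fun x => qP τ (pp x) (pu x) βA βB KA KB i) l (𝓝 1) := by
  simpa [qP] using ((hpu.mul (tendsto_sigma2P hpp τ (βA i) (KA i))).add
    (hpu.mul (tendsto_sigma2P hpp τ (βB i) (KB i)))).add_const 1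

theorem tendsto_QP {pu : ι → ℝ} (hpu : Tendsto pu l (𝓝 0)) :
    Tendsto (fun x => QP τ (pp x) (pu x) βA βB KA KB i) l (𝓝 0) := by
  simpa [QP] using tendsto_finsetSum (univ \ {i}) fun j _ => hpu.mul
    ((((tendsto_xiP hpp τ (βA i) (KA i) (βA j) (KA j)).add
      (tendsto_xiP hpp τ (βB i) (KB i) (βA j) (KA j))).add
      (tendsto_xiP hpp τ (βA i) (KA i) (βB j) (KB j))).add
      (tendsto_xiP hpp τ (βB i) (KB i) (βB j) (KB j)))

theorem tendsto_ZP {pr : ι → ℝ} (hpr : Tendsto pr l (𝓝 0)) (j : Fin N) :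
    Tendsto (fun x => ZP τ (pp x) (pr x) βA βB KA KB i j) l (𝓝 0) := by
  simpa [ZP] using hpr.mul ((tendsto_xiP hpp τ (βA j) (KA j) (βA i) (KA i)).add
    (tendsto_xiP hpp τ (βB j) (KB j) (βA i) (KA i)))

theorem tendsto_uplinkDenom {pu : ι → ℝ} (hpu : Tendsto pu l (𝓝 0)) :
    Tendsto (fun x => uplinkDenom τ (pp x) (pu x) βA βB KA KB i) l
      (𝓝 (psiP (βA i) (KA i) + psiP (βB i) (KB i))) := by
  simpa [uplinkDenom] using (((tendsto_omegaP hpp τ (βA i) (KA i)).add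
    (tendsto_omegaP hpp τ (βB i) (KB i))).mul (tendsto_qP hpp τ βA βB KA KB i hpu)).add
    (tendsto_QP hpp τ βA βB KA KB i hpu)

theorem tendsto_downlinkDenom {pr : ι → ℝ} (hpr : Tendsto pr l (𝓝 0)) :
    Tendsto (fun x => downlinkDenom τ (pp x) (pr x) βA βB KA KB i) l
      (𝓝 (∑ j, (psiP (βA j) (KA j) + psiP (βB j) (KB j)))) := by
  simpa [downlinkDenom] using tendsto_finsetSum univ fun j _ =>
    ((tendsto_omegaP hpp τ (βA j) (KA j)).add (tendsto_omegaP hpp τ (βB j) (KB j))).add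
      (tendsto_ZP hpp τ βA βB KA KB i hpr j)

end SmallPilotPower

section Rates

variable {βA βB KA KB : Fin N → ℝ} {i : Fin N} {lam τ : ℝ}

theorem R1P_nonneg {pp pu M : ℝ} (hlam : 0 ≤ lam) (hM : 0 ≤ M) (hpu : 0 ≤ pu)
    (hD : 0 ≤ uplinkDenom τ pp pu βA βB KA KB i) : 0 ≤ R1P lam τ pp pu βA βB KA KB i M :=
  mul_logb_one_add_div_nonneg hlam one_lt_two (by positivity) hD

theorem RARP_nonneg {pp pu M : ℝ} (hlam : 0 ≤ lam) (hM : 0 ≤ M) (hpu : 0 ≤ pu)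
    (hD : 0 ≤ uplinkDenom τ pp pu βA βB KA KB i) : 0 ≤ RARP lam τ pp pu βA βB KA KB i M :=
  mul_logb_one_add_div_nonneg hlam one_lt_two (by positivity) hD

theorem RBRP_nonneg {pp pu M : ℝ} (hlam : 0 ≤ lam) (hM : 0 ≤ M) (hpu : 0 ≤ pu)
    (hD : 0 ≤ uplinkDenom τ pp pu βA βB KA KB i) : 0 ≤ RBRP lam τ pp pu βA βB KA KB i M :=
  mul_logb_one_add_div_nonneg hlam one_lt_two (by positivity) hD

theorem R2P_nonneg {pp pu pr M : ℝ} (hlam : 0 ≤ lam) (hM : 0 ≤ M) (hpu : 0 ≤ pu)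
    (hpr : 0 ≤ pr)
    (hup : 0 ≤ uplinkDenom τ pp pu βA βB KA KB i)
    (hdown : 0 ≤ downlinkDenom τ pp pr βA βB KA KB i) :
    0 ≤ R2P lam τ pp pu pr βA βB KA KB i M :=
  add_nonneg
    (le_min (RARP_nonneg hlam hM hpu hup)
      (mul_logb_one_add_div_nonneg hlam one_lt_two (by positivity) hdown))
    (le_min (RBRP_nonneg hlam hM hpu hup)
      (mul_logb_one_add_div_nonneg hlam one_lt_two (by positivity) hdown))

variable {ι : Type*} {l : Filter ι} {M pp pu pr : ι → ℝ}

theorem tendsto_R1P_zero (hpp : Tendsto pp l (𝓝 0)) (hpu : Tendsto pu l (𝓝 0))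
    (hMpu : Tendsto (fun x => M x * pu x) l (𝓝 0))
    (hψ : psiP (βA i) (KA i) + psiP (βB i) (KB i) ≠ 0) :
    Tendsto (fun x => R1P lam τ (pp x) (pu x) βA βB KA KB i (M x)) l (𝓝 0) := by
  refine tendsto_mul_logb_one_add_div lam 2 ?_ (tendsto_uplinkDenom hpp τ βA βB KA KB i hpu) hψ
  simpa using (hMpu.mul ((tendsto_omegaP hpp τ (βA i) (KA i)).pow 2)).add
    (hMpu.mul ((tendsto_omegaP hpp τ (βB i) (KB i)).pow 2))

theorem tendsto_R2P_zero (hpp : Tendsto pp l (𝓝 0)) (hpr : Tendsto pr l (𝓝 0))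
    (hMpr : Tendsto (fun x => M x * pr x) l (𝓝 0))
    (hS : ∑ j, (psiP (βA j) (KA j) + psiP (βB j) (KB j)) ≠ 0)
    (hAR : ∀ᶠ x in l, 0 ≤ RARP lam τ (pp x) (pu x) βA βB KA KB i (M x))
    (hBR : ∀ᶠ x in l, 0 ≤ RBRP lam τ (pp x) (pu x) βA βB KA KB i (M x)) :
    Tendsto (fun x => R2P lam τ (pp x) (pu x) (pr x) βA βB KA KB i (M x)) l (𝓝 0) := by
  have hdown := tendsto_downlinkDenom hpp τ βA βB KA KB i hpr
  have hRB : Tendsto (fun x => RRBP lam τ (pp x) (pr x) βA βB KA KB i (M x)) l (𝓝 0) :=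
    tendsto_mul_logb_one_add_div lam 2
      (by simpa using hMpr.mul ((tendsto_omegaP hpp τ (βB i) (KB i)).pow 2)) hdown hS
  have hRA : Tendsto (fun x => RRAP lam τ (pp x) (pr x) βA βB KA KB i (M x)) l (𝓝 0) :=
    tendsto_mul_logb_one_add_div lam 2
      (by simpa using hMpr.mul ((tendsto_omegaP hpp τ (βA i) (KA i)).pow 2)) hdown hS
  simpa [R2P] using (tendsto_min_of_nonneg_of_tendsto_zero hAR hRB).add
    (tendsto_min_of_nonneg_of_tendsto_zero hBR hRA)

end Rates

theorem power_scaling_excessive_general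
    (N : ℕ) (i : Fin N) (T τ : ℝ) (hτ : 0 < τ) (hT : τ < T)
    (lam : ℝ) (hlam : lam = (T - τ) / (2 * T))
    (Eu Er Ep : ℝ) (hEu : 0 < Eu) (hEr : 0 < Er)
    (βA βB KA KB : Fin N → ℝ)
    (hβA : ∀ j, 0 < βA j) (hβB : ∀ j, 0 < βB j)
    (hKA : ∀ j, 0 < KA j) (hKB : ∀ j, 0 < KB j)
    (α ε γ : ℝ) (hγ : 0 < γ)
    (hcase : (1 < α ∧ 0 < ε) ∨ (0 < α ∧ 1 < ε)) :
    Tendsto (fun M : ℕ =>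
        RtotP lam τ (Ep / (M : ℝ) ^ γ) (Eu / (M : ℝ) ^ α) (Er / (M : ℝ) ^ ε)
          βA βB KA KB i (M : ℝ))
      atTop (𝓝 0) := by
  have hlam₀ : 0 ≤ lam := by rw [hlam]; exact div_nonneg (by linarith) (by linarith)
  obtain ⟨hα, hε⟩ : 0 < α ∧ 0 < ε := by
    rcases hcase with h | h <;> exact ⟨by linarith [h.1], by linarith [h.2]⟩
  have hp (E : ℝ) {δ : ℝ} (hδ : 0 < δ) :
      Tendsto (fun M : ℕ => E / (M : ℝ) ^ δ) atTop (𝓝 0) :=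
    ((tendsto_rpow_atTop hδ).comp tendsto_natCast_atTop_atTop).const_div_atTop E
  have hMp (E : ℝ) {δ : ℝ} (hδ : 1 < δ) :
      Tendsto (fun M : ℕ => (M : ℝ) * (E / (M : ℝ) ^ δ)) atTop (𝓝 0) :=
    (tendsto_mul_div_rpow_atTop E hδ).comp tendsto_natCast_atTop_atTop
  have hpp := hp Ep hγ
  have hpu := hp Eu hα
  have hpr := hp Er hε
  have hψ : 0 < psiP (βA i) (KA i) + psiP (βB i) (KB i) :=
    add_pos (psiP_pos (hβA i) (hKA i)) (psiP_pos (hβB i) (hKB i))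
  have hS : 0 < ∑ j, (psiP (βA j) (KA j) + psiP (βB j) (KB j)) :=
    sum_pos (fun j _ => add_pos (psiP_pos (hβA j) (hKA j)) (psiP_pos (hβB j) (hKB j)))
      ⟨i, mem_univ i⟩
  have hup := (tendsto_uplinkDenom hpp τ βA βB KA KB i hpu).eventually_const_le hψ
  have hdown := (tendsto_downlinkDenom hpp τ βA βB KA KB i hpr).eventually_const_le hS
  rcases hcase with ⟨hα₁, -⟩ | ⟨-, hε₁⟩
  · refine tendsto_min_of_tendsto_zero_of_nonneg
      (tendsto_R1P_zero hpp hpu (hMp Eu hα₁) hψ.ne') ?_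
    filter_upwards [hup, hdown] with M hu hd
    exact R2P_nonneg hlam₀ (by positivity) (by positivity) (by positivity) hu hd
  · refine tendsto_min_of_nonneg_of_tendsto_zero ?_
      (tendsto_R2P_zero hpp hpr (hMp Er hε₁) hS.ne' ?_ ?_)
    all_goals filter_upwards [hup] with M hu
    exacts [R1P_nonneg hlam₀ (by positivity) (by positivity) hu,
      RARP_nonneg hlam₀ (by positivity) (by positivity) hu,
      RBRP_nonneg hlam₀ (by positivity) (by positivity) hu]

/-- Excessive power reduction: if `γ > 0` and either `α > 1` (with any
`ε > 0`) or `ε > 1` (with any `α > 0`), then `R̃_i(M) → 0` as `M → ∞`. -/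
theorem power_scaling_excessive
    (N : ℕ) (hN : 1 ≤ N) (i : Fin N) (T τ : ℝ) (hτ : 0 < τ) (hT : τ < T)
    (lam : ℝ) (hlam : lam = (T - τ) / (2 * T))
    (Eu Er Ep : ℝ) (hEu : 0 < Eu) (hEr : 0 < Er) (hEp : 0 < Ep)
    (βA βB KA KB : Fin N → ℝ)
    (hβA : ∀ j, 0 < βA j) (hβB : ∀ j, 0 < βB j)
    (hKA : ∀ j, 0 < KA j) (hKB : ∀ j, 0 < KB j)
    (α ε γ : ℝ) (hγ : 0 < γ)
    (hcase : (1 < α ∧ 0 < ε) ∨ (0 < α ∧ 1 < ε)) :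
    Tendsto (fun M : ℕ =>
        RtotP lam τ (Ep / (M : ℝ) ^ γ) (Eu / (M : ℝ) ^ α) (Er / (M : ℝ) ^ ε)
          βA βB KA KB i (M : ℝ))
      atTop (𝓝 0) :=
  power_scaling_excessive_general N i T τ hτ hT lam hlam Eu Er Ep hEu hEr βA βB KA KB hβA hβB hKA
    hKB α ε γ hγ hcase
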